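/- Let p > 3 be a prime with p ≡ 3 (mod 4), and work in the quaternion algebra B = ℍ[ℚ, −1, −p] with basis 1, i, j, k (i² = −1, j² = −p, k = ij). Let O be the ℤ-span of {1, i, (1+j)/2, (i+k)/2} in B, and let O^T = {2x − trd(x) : x ∈ O} be its Gross lattice. Set β₁ = 2i, β₂ = j, β₃ = i − k. Then: (a) O^T equals the ℤ-span of {β₁, β₂, β₃}; (b) with pairing (x, y) = (1/2)·trd(x·ȳ), the Gram matrix of (β₁, β₂, β₃) is [[4, 0, 2], [0, p, 0], [2, 0, p+1]]; and (c) this basis attains the successive minima of O^T, namely D₁ = 4, D₂ = p, D₃ = p + 1; in particular every nonzero element of O^T has nrd ≥ 4, every element of O^T outside the ℝ-span of β₁ has nrd ≥ p, and every element of O^T outside the ℝ-span of {β₁, β₂} has nrd ≥ p + 1. -/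

import Mathlib

/-!
Since `2x - trd x = x - x̄`, the Gross lattice is the image of `O` under the `ℤ`-linear map
`x ↦ x - x̄`, which sends the generators `1, i, (1+j)/2, (i+k)/2` to `0, β₁, β₂, β₁ - β₃`.
In coordinates `aβ₁ + bβ₂ + cβ₃ = (2a+c)i + bj - ck`, so its reduced norm is
`(2a+c)² + p b² + p c²`. If `b = c = 0` the `i`-coordinate `2a` is even, which gives `D₁ = 4`;
off the line `ℚβ₁` one of `b, c` is nonzero, which gives `D₂ = p`; off the plane `ℚβ₁ + ℚβ₂`
we have `c ≠ 0`, and either `c` is even, so `p c² ≥ 4p`, or `2a + c` is odd, which gives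
`D₃ = p + 1`.
-/

open scoped Quaternion

namespace QuaternionAlgebra

variable {R : Type*} [CommRing R] {c₁ c₂ : R}

theorem re_mul_star (x y : ℍ[R, c₁, c₂]) :
    (x * star y).re =
      x.re * y.re - c₁ * x.imI * y.imI - c₂ * x.imJ * y.imJ + c₁ * c₂ * x.imK * y.imK := by
  simp only [re_mul, re_star, imI_star, imJ_star, imK_star]
  ring

theorem re_mul_star_self (q : R) (x : ℍ[R, -1, -q]) :
    (x * star x).re = x.re ^ 2 + x.imI ^ 2 + q * x.imJ ^ 2 + q * x.imK ^ 2 := by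
  rw [re_mul_star]
  ring

theorem mk_imI_mul_mk_imJ : (⟨0, 1, 0, 0⟩ * ⟨0, 0, 1, 0⟩ : ℍ[R, c₁, c₂]) = ⟨0, 0, 0, 1⟩ := by
  ext <;> simp

end QuaternionAlgebra

section GrossLattice

variable (A : Type*) [Ring A] [StarAddMonoid A]

def grossMap : A →ₗ[ℤ] A :=
  (AddMonoidHom.id A - (starAddEquiv : A ≃+ A).toAddMonoidHom).toIntLinearMap

variable {A}

theorem grossMap_apply (x : A) : grossMap A x = x - star x := rfl

def grossLattice (O : Submodule ℤ A) : Submodule ℤ A := O.map (grossMap A)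

theorem coe_grossLattice (O : Submodule ℤ A) :
    (grossLattice O : Set A) = {y | ∃ x ∈ O, y = 2 * x - (x + star x)} := by
  ext y
  simp only [grossLattice, Set.mem_ofPred_eq, SetLike.mem_coe, Submodule.mem_map,
    grossMap_apply, two_mul, add_sub_add_left_eq_sub, eq_comm]

end GrossLattice

open QuaternionAlgebra Submodule

theorem Submodule.span_triple_sub_left {R M : Type*} [Ring R] [AddCommGroup M] [Module R M]
    (x y z : M) : span R {x, y, x - z} = span R {x, y, z} := by
  have hz : z ∈ span R {x, y, x - z} := by
    simpa using sub_mem (subset_span (by simp) : x ∈ span R {x, y, x - z})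
      (subset_span (by simp) : x - z ∈ span R {x, y, x - z})
  refine le_antisymm (span_le.2 ?_) (span_le.2 ?_) <;> rintro _ (rfl | rfl | rfl)
  · exact subset_span (by simp)
  · exact subset_span (by simp)
  · exact sub_mem (subset_span (by simp)) (subset_span (by simp))
  · exact subset_span (by simp)
  · exact subset_span (by simp)
  · exact hz

theorem grossLattice_span_eq (c₁ c₂ : ℚ) :
    grossLattice (span ℤ ({1, ⟨0, 1, 0, 0⟩, ((1 : ℚ) / 2) • (1 + ⟨0, 0, 1, 0⟩),
      ((1 : ℚ) / 2) • (⟨0, 1, 0, 0⟩ + ⟨0, 0, 0, 1⟩)} : Set ℍ[ℚ, c₁, c₂])) =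
      span ℤ {⟨0, 2, 0, 0⟩, ⟨0, 0, 1, 0⟩, ⟨0, 1, 0, -1⟩} := by
  rw [grossLattice, map_span]
  set f := grossMap ℍ[ℚ, c₁, c₂]
  have hf : f 1 = 0 ∧ f ⟨0, 1, 0, 0⟩ = ⟨0, 2, 0, 0⟩ ∧
      f (((1 : ℚ) / 2) • (1 + ⟨0, 0, 1, 0⟩)) = ⟨0, 0, 1, 0⟩ ∧
      f (((1 : ℚ) / 2) • (⟨0, 1, 0, 0⟩ + ⟨0, 0, 0, 1⟩)) = ⟨0, 2, 0, 0⟩ - ⟨0, 1, 0, -1⟩ := by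
    refine ⟨?_, ?_, ?_, ?_⟩ <;> ext <;> norm_num [f, grossMap_apply]
  simp only [Set.image_insert_eq, Set.image_singleton, hf]
  rw [span_insert_zero, span_triple_sub_left]

theorem linearIndependent_grossBasis (c₁ c₂ : ℚ) :
    LinearIndependent ℚ ![(⟨0, 2, 0, 0⟩ : ℍ[ℚ, c₁, c₂]), ⟨0, 0, 1, 0⟩, ⟨0, 1, 0, -1⟩] := by
  rw [Fintype.linearIndependent_iff]
  intro g hg
  simp only [Fin.sum_univ_three, Matrix.cons_val_zero, Matrix.cons_val_one, Matrix.cons_val,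
    smul_mk, smul_eq_mul, mk_add_mk, QuaternionAlgebra.ext_iff, imI_zero, imJ_zero,
    imK_zero] at hg
  obtain ⟨-, hI, hJ, hK⟩ := hg
  intro m
  fin_cases m <;> simp <;> linarith

def grossForm (q : ℚ) (a b c : ℤ) : ℚ := (2 * a + c) ^ 2 + q * b ^ 2 + q * c ^ 2

theorem re_mul_star_self_zsmul_grossBasis (q : ℚ) (a b c : ℤ) :
    ((a • ⟨0, 2, 0, 0⟩ + b • ⟨0, 0, 1, 0⟩ + c • ⟨0, 1, 0, -1⟩ : ℍ[ℚ, -1, -q]) *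
      star (a • ⟨0, 2, 0, 0⟩ + b • ⟨0, 0, 1, 0⟩ + c • ⟨0, 1, 0, -1⟩)).re =
      grossForm q a b c := by
  simp only [re_mul_star_self, grossForm, smul_mk, zsmul_eq_mul, mk_add_mk]
  ring

theorem one_le_intCast_sq {R : Type*} [Ring R] [LinearOrder R] [IsStrictOrderedRing R] {n : ℤ}
    (h : n ≠ 0) : (1 : R) ≤ (n : R) ^ 2 := by
  exact_mod_cast (one_le_sq_iff_one_le_abs _).2 (Int.one_le_abs h)

section GrossForm

variable {q : ℚ} {a b c : ℤ}

theorem le_grossForm (hq : 0 ≤ q) (h : b ≠ 0 ∨ c ≠ 0) : q ≤ grossForm q a b c := by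
  unfold grossForm
  have hb2 : 0 ≤ q * (b : ℚ) ^ 2 := by positivity
  have hc2 : 0 ≤ q * (c : ℚ) ^ 2 := by positivity
  rcases h with hb | hc
  · nlinarith [one_le_intCast_sq (R := ℚ) hb, sq_nonneg (2 * a + c : ℚ)]
  · nlinarith [one_le_intCast_sq (R := ℚ) hc, sq_nonneg (2 * a + c : ℚ)]

theorem four_le_grossForm (hq : 4 ≤ q) (h : a ≠ 0 ∨ b ≠ 0 ∨ c ≠ 0) :
    4 ≤ grossForm q a b c := by
  by_cases hbc : b ≠ 0 ∨ c ≠ 0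
  · exact hq.trans (le_grossForm (by linarith) hbc)
  · obtain ⟨rfl, rfl⟩ : b = 0 ∧ c = 0 := by tauto
    have ha : a ≠ 0 := by tauto
    simp only [grossForm, Int.cast_zero]
    nlinarith [one_le_intCast_sq (R := ℚ) ha]

theorem add_one_le_grossForm (hq : 1 ≤ q) (hc : c ≠ 0) : q + 1 ≤ grossForm q a b c := by
  have hb2 : 0 ≤ q * (b : ℚ) ^ 2 := by positivity
  rcases Int.even_or_odd c with ⟨d, rfl⟩ | hodd
  · have hd : d ≠ 0 := by omega
    simp only [grossForm, Int.cast_add]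
    nlinarith [one_le_intCast_sq (R := ℚ) hd, sq_nonneg (2 * a + (d + d) : ℚ)]
  · have hu : 2 * a + c ≠ 0 := fun h => Int.not_even_iff_odd.2 hodd ⟨-a, by omega⟩
    have hu2 : (1 : ℚ) ≤ (2 * a + c : ℚ) ^ 2 := by exact_mod_cast one_le_intCast_sq (R := ℚ) hu
    have hc2 : q ≤ q * (c : ℚ) ^ 2 := by nlinarith [one_le_intCast_sq (R := ℚ) hc]
    unfold grossForm
    linarith

end GrossForm

section SuccessiveMinima

variable {q : ℚ} {w : ℍ[ℚ, -1, -q]}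

theorem four_le_re_mul_star_of_mem_span (hq : 4 ≤ q)
    (hw : w ∈ span ℤ {⟨0, 2, 0, 0⟩, ⟨0, 0, 1, 0⟩, ⟨0, 1, 0, -1⟩}) (hw₀ : w ≠ 0) :
    4 ≤ (w * star w).re := by
  obtain ⟨a, b, c, rfl⟩ := mem_span_triple.1 hw
  rw [re_mul_star_self_zsmul_grossBasis]
  refine four_le_grossForm hq ?_
  contrapose! hw₀
  simp [hw₀]

theorem le_re_mul_star_of_mem_span (hq : 0 ≤ q)
    (hw : w ∈ span ℤ {⟨0, 2, 0, 0⟩, ⟨0, 0, 1, 0⟩, ⟨0, 1, 0, -1⟩})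
    (hw₁ : w ∉ span ℚ {⟨0, 2, 0, 0⟩}) :
    q ≤ (w * star w).re := by
  obtain ⟨a, b, c, rfl⟩ := mem_span_triple.1 hw
  rw [re_mul_star_self_zsmul_grossBasis]
  refine le_grossForm hq ?_
  contrapose! hw₁
  obtain ⟨rfl, rfl⟩ := hw₁
  exact mem_span_singleton.2 ⟨a, by simp [Int.cast_smul_eq_zsmul]⟩

theorem add_one_le_re_mul_star_of_mem_span (hq : 1 ≤ q)
    (hw : w ∈ span ℤ {⟨0, 2, 0, 0⟩, ⟨0, 0, 1, 0⟩, ⟨0, 1, 0, -1⟩})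
    (hw₂ : w ∉ span ℚ {⟨0, 2, 0, 0⟩, ⟨0, 0, 1, 0⟩}) :
    q + 1 ≤ (w * star w).re := by
  obtain ⟨a, b, c, rfl⟩ := mem_span_triple.1 hw
  rw [re_mul_star_self_zsmul_grossBasis]
  refine add_one_le_grossForm hq ?_
  rintro rfl
  exact hw₂ (mem_span_pair.2 ⟨a, b, by simp [Int.cast_smul_eq_zsmul]⟩)

end SuccessiveMinima

theorem stmt_13_general (p : ℕ) (hp3 : 3 < p)
    (i j k : ℍ[ℚ, -1, -(p : ℚ)])
    (hi : i = ⟨0, 1, 0, 0⟩) (hj : j = ⟨0, 0, 1, 0⟩) (hk : k = i * j)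
    (O : Submodule ℤ ℍ[ℚ, -1, -(p : ℚ)])
    (hO : O = Submodule.span ℤ
      ({1, i, ((1 : ℚ)/2) • (1 + j), ((1 : ℚ)/2) • (i + k)} : Set ℍ[ℚ, -1, -(p : ℚ)]))
    (β₁ β₂ β₃ : ℍ[ℚ, -1, -(p : ℚ)])
    (hβ₁ : β₁ = 2 * i) (hβ₂ : β₂ = j) (hβ₃ : β₃ = i - k) :
    -- (a) the Gross lattice of `O` is spanned by `β₁, β₂, β₃`
    {y | ∃ x ∈ O, y = 2 * x - (x + star x)} =
      (Submodule.span ℤ ({β₁, β₂, β₃} : Set ℍ[ℚ, -1, -(p : ℚ)]) : Set ℍ[ℚ, -1, -(p : ℚ)]) ∧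
    -- (b) the Gram matrix of `(β₁, β₂, β₃)`
    (β₁ * star β₁).re = 4 ∧ (β₁ * star β₂).re = 0 ∧ (β₁ * star β₃).re = 2 ∧
    (β₂ * star β₂).re = (p : ℚ) ∧ (β₂ * star β₃).re = 0 ∧
    (β₃ * star β₃).re = (p : ℚ) + 1 ∧
    -- (c) the basis attains the successive minima `D₁ = 4`, `D₂ = p`, `D₃ = p + 1`
    LinearIndependent ℚ ![β₁, β₂, β₃] ∧
    (∀ w ∈ Submodule.span ℤ ({β₁, β₂, β₃} : Set ℍ[ℚ, -1, -(p : ℚ)]), w ≠ 0 →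
      4 ≤ (w * star w).re) ∧
    (∀ w ∈ Submodule.span ℤ ({β₁, β₂, β₃} : Set ℍ[ℚ, -1, -(p : ℚ)]),
      w ∉ Submodule.span ℚ ({β₁} : Set ℍ[ℚ, -1, -(p : ℚ)]) →
      (p : ℚ) ≤ (w * star w).re) ∧
    (∀ w ∈ Submodule.span ℤ ({β₁, β₂, β₃} : Set ℍ[ℚ, -1, -(p : ℚ)]),
      w ∉ Submodule.span ℚ ({β₁, β₂} : Set ℍ[ℚ, -1, -(p : ℚ)]) →
      (p : ℚ) + 1 ≤ (w * star w).re) := by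
  obtain rfl : k = ⟨0, 0, 0, 1⟩ := by rw [hk, hi, hj, mk_imI_mul_mk_imJ]
  obtain rfl : β₁ = ⟨0, 2, 0, 0⟩ := by rw [hβ₁, hi]; ext <;> simp
  obtain rfl : β₃ = ⟨0, 1, 0, -1⟩ := by rw [hβ₃, hi]; ext <;> simp
  subst hi hj hβ₂ hO
  have hp4 : (4 : ℚ) ≤ p := by exact_mod_cast hp3
  refine ⟨by rw [← coe_grossLattice, grossLattice_span_eq], ?_, ?_, ?_, ?_, ?_, ?_,
    linearIndependent_grossBasis _ _,
    fun w hw => four_le_re_mul_star_of_mem_span hp4 hw,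
    fun w hw => le_re_mul_star_of_mem_span (by linarith) hw,
    fun w hw => add_one_le_re_mul_star_of_mem_span (by linarith) hw⟩
  all_goals norm_num [re_mul_star, add_comm]

/-- Normalized successive minimal basis of the Gross lattice of the supersingular elliptic
curve with `j`-invariant `1728` (for `p > 3`, `p ≡ 3 mod 4`): in `B = ℍ[ℚ, -1, -p]`, with
`O = ⟨1, i, (1+j)/2, (i+k)/2⟩`, the Gross lattice `{2x - trd x : x ∈ O}` is spanned by
`β₁ = 2i`, `β₂ = j`, `β₃ = i - k`, whose Gram matrix (for the pairing
`(x,y) = (1/2)·trd(x·ȳ)`) is `[[4, 0, 2], [0, p, 0], [2, 0, p+1]]`, and this basis attains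
the successive minima `D₁ = 4`, `D₂ = p`, `D₃ = p + 1`. -/
theorem stmt_13 (p : ℕ) (hp : p.Prime) (hp3 : 3 < p) (hmod : p % 4 = 3)
    (i j k : ℍ[ℚ, -1, -(p : ℚ)])
    (hi : i = ⟨0, 1, 0, 0⟩) (hj : j = ⟨0, 0, 1, 0⟩) (hk : k = i * j)
    (O : Submodule ℤ ℍ[ℚ, -1, -(p : ℚ)])
    (hO : O = Submodule.span ℤ
      ({1, i, ((1 : ℚ)/2) • (1 + j), ((1 : ℚ)/2) • (i + k)} : Set ℍ[ℚ, -1, -(p : ℚ)]))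
    (β₁ β₂ β₃ : ℍ[ℚ, -1, -(p : ℚ)])
    (hβ₁ : β₁ = 2 * i) (hβ₂ : β₂ = j) (hβ₃ : β₃ = i - k) :
    -- (a) the Gross lattice of `O` is spanned by `β₁, β₂, β₃`
    {y | ∃ x ∈ O, y = 2 * x - (x + star x)} =
      (Submodule.span ℤ ({β₁, β₂, β₃} : Set ℍ[ℚ, -1, -(p : ℚ)]) : Set ℍ[ℚ, -1, -(p : ℚ)]) ∧
    -- (b) the Gram matrix of `(β₁, β₂, β₃)`
    (β₁ * star β₁).re = 4 ∧ (β₁ * star β₂).re = 0 ∧ (β₁ * star β₃).re = 2 ∧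
    (β₂ * star β₂).re = (p : ℚ) ∧ (β₂ * star β₃).re = 0 ∧
    (β₃ * star β₃).re = (p : ℚ) + 1 ∧
    -- (c) the basis attains the successive minima `D₁ = 4`, `D₂ = p`, `D₃ = p + 1`
    LinearIndependent ℚ ![β₁, β₂, β₃] ∧
    (∀ w ∈ Submodule.span ℤ ({β₁, β₂, β₃} : Set ℍ[ℚ, -1, -(p : ℚ)]), w ≠ 0 →
      4 ≤ (w * star w).re) ∧
    (∀ w ∈ Submodule.span ℤ ({β₁, β₂, β₃} : Set ℍ[ℚ, -1, -(p : ℚ)]),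
      w ∉ Submodule.span ℚ ({β₁} : Set ℍ[ℚ, -1, -(p : ℚ)]) →
      (p : ℚ) ≤ (w * star w).re) ∧
    (∀ w ∈ Submodule.span ℤ ({β₁, β₂, β₃} : Set ℍ[ℚ, -1, -(p : ℚ)]),
      w ∉ Submodule.span ℚ ({β₁, β₂} : Set ℍ[ℚ, -1, -(p : ℚ)]) →
      (p : ℚ) + 1 ≤ (w * star w).re) :=
  stmt_13_general p hp3 i j k hi hj hk O hO β₁ β₂ β₃ hβ₁ hβ₂ hβ₃
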